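/- Define σ_n² = (16π³/(2n+1)) ( (2π²/3)|P̃_n^0(0)|² + 2 ∑_{j=1}^{n} |P̃_n^j(0)|²/j² ). Then for even n, (16/3)π³/(n+1) ≤ σ_n² ≤ (8π⁴/3 + 4π²)/(n+1), and for odd n, 16π/(n+1) ≤ σ_n² ≤ 4π²(4/√3 + 1)/(n+1). -/

import Mathlib

/-!
Put `w l = (2l-1)‼/(2l)‼`. If `n - j = 2a` and `n + j = 2b`, then
`|P̃_n^j(0)|² = (2n+1)/(4π) w_a w_b`, so
`σ_{2k}² = 8π⁴/3 w_k² + 8π² ∑_{m=1}^k w_{k-m} w_{k+m}/(2m)²` and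
`σ_{2k+1}² = 8π² ∑_{m=0}^k w_{k-m} w_{k+m+1}/(2m+1)²`. Wallis' product gives
`2/π ≤ (2l+1) w_l² ≤ 1`, and the lower bounds keep only the term `j = 0` (resp. `j = 1`).
For the upper bounds, `(2l+1) w_l² ≤ 1` and AM-GM give `w_a w_b ≤ N/((N-r)(N+r))` with
`N = a+b+1 = n+1` and `r = b-a = j`; the partial fraction
`N/(r²(N²-r²)) = (1/N)(1/r² + 1/(N²-r²))` then reduces everything to elementary sums, bounded
by telescoping and termwise estimates.
-/

open Real Finset

/-- The square `|P̃_n^j(0)|²` of the normalized associated Legendre function at zero: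
zero when `n + j` is odd, and given by the double-factorial formula when `n + j` is even. -/
noncomputable def ptildeSq (n j : ℕ) : ℝ :=
  if Even (n + j) then
    (2 * n + 1) / (4 * Real.pi) *
      ((Nat.doubleFactorial (n - j - 1) * Nat.doubleFactorial (n + j - 1) : ℝ) /
        (Nat.doubleFactorial (n - j) * Nat.doubleFactorial (n + j) : ℝ))
  else 0

/-- The squared singular values `σ_n²` of the spherical arc transform. -/
noncomputable def sigmaSq (n : ℕ) : ℝ :=
  16 * Real.pi ^ 3 / (2 * n + 1) *
    (2 * Real.pi ^ 2 / 3 * ptildeSq n 0 +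
      2 * ∑ j ∈ Finset.Icc 1 n, ptildeSq n j / (j : ℝ) ^ 2)

open scoped Nat

/-- `ℕ` subtraction gives `2 * 0 - 1 = 0`, matching the convention `(-1)‼ = 1`. -/
noncomputable def wallisRatio (l : ℕ) : ℝ := ((2 * l - 1)‼ : ℝ) / (2 * l)‼

lemma wallisRatio_zero : wallisRatio 0 = 1 := by
  simp [wallisRatio]

lemma wallisRatio_succ (l : ℕ) :
    wallisRatio (l + 1) = wallisRatio l * ((2 * l + 1) / (2 * l + 2)) := by
  have hodd : (2 * (l + 1) - 1)‼ = (2 * l + 1) * (2 * l - 1)‼ := by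
    rw [show 2 * (l + 1) - 1 = 2 * l + 1 by omega, Nat.doubleFactorial_add_one]
  have heven : (2 * (l + 1))‼ = (2 * l + 2) * (2 * l)‼ := Nat.doubleFactorial_add_two _
  rw [wallisRatio, wallisRatio, hodd, heven]
  push_cast
  field_simp

lemma wallisRatio_pos (l : ℕ) : 0 < wallisRatio l := by
  unfold wallisRatio; positivity

lemma Real.Wallis.one_le_W (k : ℕ) : 1 ≤ Wallis.W k := by
  induction k with
  | zero => simp [Wallis.W]
  | succ k ih =>
    rw [Wallis.W_succ]
    have : 1 ≤ (2 * (k : ℝ) + 2) / (2 * k + 1) * ((2 * k + 2) / (2 * k + 3)) := by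
      rw [div_mul_div_comm, one_le_div (by positivity)]
      nlinarith
    nlinarith

lemma mul_wallisRatio_sq_mul_W (l : ℕ) :
    (2 * l + 1) * wallisRatio l ^ 2 * Wallis.W l = 1 := by
  induction l with
  | zero => simp [wallisRatio_zero, Wallis.W]
  | succ l ih =>
    rw [wallisRatio_succ, Wallis.W_succ]
    convert ih using 1
    push_cast
    field_simp
    ring

lemma two_div_pi_le_mul_wallisRatio_sq (l : ℕ) : 2 / π ≤ (2 * l + 1) * wallisRatio l ^ 2 := by
  have h := mul_wallisRatio_sq_mul_W l
  rw [div_le_iff₀ pi_pos]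
  nlinarith [Wallis.W_le l, Wallis.W_pos l, wallisRatio_pos l]

lemma mul_wallisRatio_sq_le_one (l : ℕ) : (2 * l + 1) * wallisRatio l ^ 2 ≤ 1 := by
  have h := mul_wallisRatio_sq_mul_W l
  nlinarith [Wallis.one_le_W l, wallisRatio_pos l]

lemma wallisRatio_mul_le (a b : ℕ) :
    wallisRatio a * wallisRatio b ≤ (a + b + 1) / ((2 * a + 1) * (2 * b + 1)) := by
  have ha := mul_wallisRatio_sq_le_one a
  have hb := mul_wallisRatio_sq_le_one b
  rw [le_div_iff₀ (by positivity)]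
  nlinarith [sq_nonneg ((2 * a + 1) * wallisRatio a - (2 * b + 1) * wallisRatio b),
    wallisRatio_pos a, wallisRatio_pos b]

lemma wallisRatio_mul_div_sq_le {a b : ℕ} (hab : a < b) :
    wallisRatio a * wallisRatio b / ((b : ℝ) - a) ^ 2 ≤
      1 / (a + b + 1) * (1 / ((b : ℝ) - a) ^ 2 + 1 / ((2 * a + 1) * (2 * b + 1))) := by
  have hr : (0 : ℝ) < b - a := sub_pos.mpr (by exact_mod_cast hab)
  calc _ ≤ (a + b + 1) / ((2 * a + 1) * (2 * b + 1)) / ((b : ℝ) - a) ^ 2 := by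
        gcongr; exact wallisRatio_mul_le a b
    _ = _ := by field_simp; ring

lemma ptildeSq_of_not_even {n j : ℕ} (h : ¬Even (n + j)) : ptildeSq n j = 0 := if_neg h

lemma ptildeSq_eq_wallisRatio_mul {a b n j : ℕ} (hn : a + b = n) (hj : a + j = b) :
    ptildeSq n j = (2 * n + 1) / (4 * π) * (wallisRatio a * wallisRatio b) := by
  subst hn hj
  have hpar : Even (a + (a + j) + j) := ⟨a + j, by ring⟩
  rw [ptildeSq, if_pos hpar, wallisRatio, wallisRatio, show a + (a + j) - j = 2 * a by omega,
    show a + (a + j) + j = 2 * (a + j) by ring]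
  push_cast
  ring

section Parity

variable {M : Type*} [AddCommMonoid M]

lemma sum_Icc_two_mul_eq_of_odd {f : ℕ → M} (hf : ∀ j, Odd j → f j = 0) (k : ℕ) :
    ∑ j ∈ Icc 1 (2 * k), f j = ∑ m ∈ Icc 1 k, f (2 * m) := by
  induction k with
  | zero => simp
  | succ k ih =>
    rw [show 2 * (k + 1) = 2 * k + 1 + 1 by ring, sum_Icc_succ_top (by omega),
      sum_Icc_succ_top (by omega), sum_Icc_succ_top (by omega), ih, hf _ (odd_two_mul_add_one k),
      add_zero, show 2 * k + 1 + 1 = 2 * (k + 1) by ring]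

lemma sum_Icc_two_mul_add_one_eq_of_even {f : ℕ → M} (hf : ∀ j, Even j → f j = 0)
    (k : ℕ) :
    ∑ j ∈ Icc 1 (2 * k + 1), f j = ∑ m ∈ range (k + 1), f (2 * m + 1) := by
  induction k with
  | zero => simp
  | succ k ih =>
    rw [show 2 * (k + 1) + 1 = 2 * k + 1 + 1 + 1 by ring, sum_Icc_succ_top (by omega),
      sum_Icc_succ_top (by omega), sum_range_succ, ih, hf _ ⟨k + 1, by ring⟩, add_zero]
    rfl

end Parity

lemma sigmaSq_two_mul (k : ℕ) :
    sigmaSq (2 * k) = 8 * π ^ 4 / 3 * wallisRatio k ^ 2 +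
      8 * π ^ 2 * ∑ m ∈ Icc 1 k, wallisRatio (k - m) * wallisRatio (k + m) / (2 * m) ^ 2 := by
  have hodd : ∀ j, Odd j → ptildeSq (2 * k) j / (j : ℝ) ^ 2 = 0 := fun j hj => by
    rw [ptildeSq_of_not_even (by simpa [Nat.even_add] using hj), zero_div]
  have hsum : ∑ m ∈ Icc 1 k, ptildeSq (2 * k) (2 * m) / ((2 * m : ℕ) : ℝ) ^ 2 =
      (2 * (2 * k : ℕ) + 1) / (4 * π) *
        ∑ m ∈ Icc 1 k, wallisRatio (k - m) * wallisRatio (k + m) / (2 * m) ^ 2 := by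
    rw [mul_sum]
    refine sum_congr rfl fun m hm => ?_
    have hmk : m ≤ k := (mem_Icc.mp hm).2
    rw [ptildeSq_eq_wallisRatio_mul (by omega : k - m + (k + m) = 2 * k) (by omega)]
    push_cast
    ring
  rw [sigmaSq, sum_Icc_two_mul_eq_of_odd hodd, hsum,
    ptildeSq_eq_wallisRatio_mul (a := k) (b := k) (by ring) (by ring)]
  push_cast
  field_simp
  ring

lemma sigmaSq_two_mul_add_one (k : ℕ) :
    sigmaSq (2 * k + 1) = 8 * π ^ 2 *
      ∑ m ∈ range (k + 1), wallisRatio (k - m) * wallisRatio (k + m + 1) / (2 * m + 1) ^ 2 := by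
  have heven : ∀ j, Even j → ptildeSq (2 * k + 1) j / (j : ℝ) ^ 2 = 0 := fun j hj => by
    rw [ptildeSq_of_not_even (by simpa [Nat.even_add, parity_simps] using hj), zero_div]
  have hsum :
      ∑ m ∈ range (k + 1), ptildeSq (2 * k + 1) (2 * m + 1) / ((2 * m + 1 : ℕ) : ℝ) ^ 2 =
      (2 * (2 * k + 1 : ℕ) + 1) / (4 * π) *
        ∑ m ∈ range (k + 1),
          wallisRatio (k - m) * wallisRatio (k + m + 1) / (2 * m + 1) ^ 2 := by
    rw [mul_sum]
    refine sum_congr rfl fun m hm => ?_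
    have hmk : m ≤ k := Nat.lt_succ_iff.mp (mem_range.mp hm)
    rw [ptildeSq_eq_wallisRatio_mul (by omega : k - m + (k + m + 1) = 2 * k + 1) (by omega)]
    push_cast
    ring
  rw [sigmaSq, sum_Icc_two_mul_add_one_eq_of_even heven, hsum,
    ptildeSq_of_not_even (by simp [parity_simps] : ¬Even (2 * k + 1 + 0))]
  push_cast
  field_simp
  ring

lemma sum_Icc_inv_two_mul_sq_le (k : ℕ) :
    ∑ m ∈ Icc 1 (k + 1), 1 / (2 * (m : ℝ)) ^ 2 ≤
      5 / 12 - 1 / (2 * (2 * (k : ℝ) + 3)) := by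
  induction k with
  | zero => norm_num
  | succ k ih =>
    rw [sum_Icc_succ_top (by omega)]
    have hstep : 1 / (2 * ((k + 1 + 1 : ℕ) : ℝ)) ^ 2 ≤
        1 / (2 * (2 * k + 3)) - 1 / (2 * (2 * ((k + 1 : ℕ) : ℝ) + 3)) := by
      push_cast
      rw [div_sub_div _ _ (by positivity) (by positivity),
        div_le_div_iff₀ (by positivity) (by positivity)]
      nlinarith
    linarith

lemma sum_range_inv_two_mul_add_one_sq_le (k : ℕ) :
    ∑ m ∈ range (k + 1), 1 / (2 * (m : ℝ) + 1) ^ 2 ≤ 5 / 4 - 1 / (4 * ((k : ℝ) + 1)) := by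
  induction k with
  | zero => norm_num
  | succ k ih =>
    rw [sum_range_succ]
    have hstep : 1 / (2 * ((k + 1 : ℕ) : ℝ) + 1) ^ 2 ≤
        1 / (4 * (k + 1)) - 1 / (4 * (((k + 1 : ℕ) : ℝ) + 1)) := by
      push_cast
      rw [div_sub_div _ _ (by positivity) (by positivity),
        div_le_div_iff₀ (by positivity) (by positivity)]
      nlinarith
    linarith

lemma sum_Icc_inv_sq_add_inv_mul_le (k : ℕ) :
    ∑ m ∈ Icc 1 k,
      (1 / (2 * (m : ℝ)) ^ 2 + 1 / ((2 * k - 2 * m + 1) * (2 * k + 2 * m + 1))) ≤ 1 / 2 := by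
  obtain _ | k := k
  · simp
  have hmid : ∀ m ∈ Icc 1 k, 1 / ((2 * ((k + 1 : ℕ) : ℝ) - 2 * m + 1) *
      (2 * ((k + 1 : ℕ) : ℝ) + 2 * m + 1)) ≤ 1 / (3 * (4 * k + 3)) := by
    intro m hm
    have hmk : (m : ℝ) ≤ k := by exact_mod_cast (mem_Icc.mp hm).2
    have hm1 : (1 : ℝ) ≤ m := by exact_mod_cast (mem_Icc.mp hm).1
    push_cast
    apply one_div_le_one_div_of_le (by positivity)
    -- both factors are at least 3 and they sum to 4k + 6
    nlinarith
  have hlast : 1 / ((2 * ((k + 1 : ℕ) : ℝ) - 2 * ((k + 1 : ℕ) : ℝ) + 1) *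
      (2 * ((k + 1 : ℕ) : ℝ) + 2 * ((k + 1 : ℕ) : ℝ) + 1)) = 1 / (4 * k + 5) := by
    push_cast; ring_nf
  have hcross : ∑ m ∈ Icc 1 (k + 1), 1 / ((2 * ((k + 1 : ℕ) : ℝ) - 2 * m + 1) *
      (2 * ((k + 1 : ℕ) : ℝ) + 2 * m + 1)) ≤ k / (3 * (4 * k + 3)) + 1 / (4 * k + 5) := by
    rw [sum_Icc_succ_top (by omega), hlast]
    gcongr
    refine (sum_le_sum hmid).trans (le_of_eq ?_)
    rw [sum_const, Nat.card_Icc, nsmul_eq_mul]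
    push_cast
    ring
  rw [sum_add_distrib]
  have hsq := sum_Icc_inv_two_mul_sq_le k
  have harith : 5 / 12 - 1 / (2 * (2 * (k : ℝ) + 3)) + (k / (3 * (4 * k + 3)) + 1 / (4 * k + 5))
      ≤ 1 / 2 := by
    rw [← sub_nonneg]
    have hk : (0 : ℝ) ≤ k := k.cast_nonneg
    field_simp
    ring_nf
    nlinarith
  linarith

lemma sum_range_inv_sq_add_inv_mul_le (k : ℕ) :
    ∑ m ∈ range (k + 1),
      (1 / (2 * (m : ℝ) + 1) ^ 2 + 1 / ((2 * k - 2 * m + 1) * (2 * k + 2 * m + 3))) ≤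
        19 / 12 := by
  have hcross : ∑ m ∈ range (k + 1), 1 / ((2 * (k : ℝ) - 2 * m + 1) * (2 * k + 2 * m + 3)) ≤
      1 / 3 := by
    calc _ ≤ ∑ _m ∈ range (k + 1), 1 / (4 * (k : ℝ) + 3) := by
          refine sum_le_sum fun m hm => ?_
          have hmk : (m : ℝ) ≤ k := by exact_mod_cast Nat.lt_succ_iff.mp (mem_range.mp hm)
          apply one_div_le_one_div_of_le (by positivity)
          nlinarith
      _ = (k + 1) / (4 * k + 3) := by
          rw [sum_const, card_range, nsmul_eq_mul]; push_cast; ring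
      _ ≤ 1 / 3 := by
          rw [div_le_div_iff₀ (by positivity) (by norm_num)]; linarith [k.cast_nonneg (α := ℝ)]
  rw [sum_add_distrib]
  have hsq := sum_range_inv_two_mul_add_one_sq_le k
  have : (0 : ℝ) ≤ 1 / (4 * (k + 1)) := by positivity
  linarith

lemma sum_wallisRatio_mul_div_two_mul_sq_le (k : ℕ) :
    ∑ m ∈ Icc 1 k, wallisRatio (k - m) * wallisRatio (k + m) / (2 * m) ^ 2 ≤
      1 / (2 * (2 * (k : ℝ) + 1)) := by
  have hterm : ∀ m ∈ Icc 1 k, wallisRatio (k - m) * wallisRatio (k + m) / (2 * m) ^ 2 ≤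
      1 / (2 * k + 1) *
        (1 / (2 * (m : ℝ)) ^ 2 + 1 / ((2 * k - 2 * m + 1) * (2 * k + 2 * m + 1))) := by
    intro m hm
    obtain ⟨hm1, hmk⟩ := mem_Icc.mp hm
    have h := wallisRatio_mul_div_sq_le (show k - m < k + m by omega)
    push_cast [Nat.cast_sub hmk] at h
    convert h using 3 <;> ring
  calc _ ≤ _ := sum_le_sum hterm
    _ = 1 / (2 * k + 1) * ∑ m ∈ Icc 1 k,
          (1 / (2 * (m : ℝ)) ^ 2 + 1 / ((2 * k - 2 * m + 1) * (2 * k + 2 * m + 1))) :=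
        (mul_sum ..).symm
    _ ≤ 1 / (2 * k + 1) * (1 / 2) := by gcongr; exact sum_Icc_inv_sq_add_inv_mul_le k
    _ = _ := by field_simp

lemma sum_wallisRatio_mul_div_two_mul_add_one_sq_le (k : ℕ) :
    ∑ m ∈ range (k + 1), wallisRatio (k - m) * wallisRatio (k + m + 1) / (2 * m + 1) ^ 2 ≤
      1 / (2 * (k : ℝ) + 2) * (19 / 12) := by
  have hterm : ∀ m ∈ range (k + 1),
      wallisRatio (k - m) * wallisRatio (k + m + 1) / (2 * m + 1) ^ 2 ≤ 1 / (2 * k + 2) *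
        (1 / (2 * (m : ℝ) + 1) ^ 2 + 1 / ((2 * k - 2 * m + 1) * (2 * k + 2 * m + 3))) := by
    intro m hm
    have hmk := Nat.lt_succ_iff.mp (mem_range.mp hm)
    have h := wallisRatio_mul_div_sq_le (show k - m < k + m + 1 by omega)
    push_cast [Nat.cast_sub hmk] at h
    convert h using 3 <;> ring
  calc _ ≤ _ := sum_le_sum hterm
    _ = _ := (mul_sum ..).symm
    _ ≤ _ := by gcongr; exact sum_range_inv_sq_add_inv_mul_le k

lemma sigmaSq_two_mul_bounds (k : ℕ) :
    16 / 3 * π ^ 3 / (2 * k + 1) ≤ sigmaSq (2 * k) ∧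
      sigmaSq (2 * k) ≤ (8 * π ^ 4 / 3 + 4 * π ^ 2) / (2 * k + 1) := by
  have hcross : 0 ≤ ∑ m ∈ Icc 1 k, wallisRatio (k - m) * wallisRatio (k + m) / (2 * m) ^ 2 :=
    sum_nonneg fun m _ => by
      have := wallisRatio_pos (k - m); have := wallisRatio_pos (k + m); positivity
  have hlow : 2 / π / (2 * k + 1) ≤ wallisRatio k ^ 2 := by
    rw [div_le_iff₀ (by positivity), mul_comm]; exact two_div_pi_le_mul_wallisRatio_sq k
  have hup : wallisRatio k ^ 2 ≤ 1 / (2 * k + 1) := by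
    rw [le_div_iff₀ (by positivity), mul_comm]; exact mul_wallisRatio_sq_le_one k
  rw [sigmaSq_two_mul]
  constructor
  · calc 16 / 3 * π ^ 3 / (2 * k + 1) = 8 * π ^ 4 / 3 * (2 / π / (2 * k + 1)) := by
          field_simp; ring
      _ ≤ 8 * π ^ 4 / 3 * wallisRatio k ^ 2 := by gcongr
      _ ≤ _ := le_add_of_nonneg_right (by positivity)
  · calc _ ≤ 8 * π ^ 4 / 3 * (1 / (2 * k + 1)) + 8 * π ^ 2 * (1 / (2 * (2 * k + 1))) := by
          gcongr; exact sum_wallisRatio_mul_div_two_mul_sq_le k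
      _ = _ := by field_simp; ring

lemma sigmaSq_two_mul_add_one_bounds (k : ℕ) :
    16 * π / (2 * k + 2) ≤ sigmaSq (2 * k + 1) ∧
      sigmaSq (2 * k + 1) ≤ 4 * π ^ 2 * (4 / √3 + 1) / (2 * k + 2) := by
  rw [sigmaSq_two_mul_add_one]
  constructor
  · calc 16 * π / (2 * k + 2) = 8 * π ^ 2 * (2 / π / (2 * k + 2)) := by field_simp; ring
      _ ≤ 8 * π ^ 2 * ((2 * k + 1) * wallisRatio k ^ 2 / (2 * k + 2)) := by
          gcongr; exact two_div_pi_le_mul_wallisRatio_sq k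
      _ = 8 * π ^ 2 *
          (wallisRatio (k - 0) * wallisRatio (k + 0 + 1) / (2 * ((0 : ℕ) : ℝ) + 1) ^ 2) := by
          rw [Nat.sub_zero, add_zero, wallisRatio_succ]; push_cast; field_simp; ring
      _ ≤ _ := by
          gcongr
          refine single_le_sum (f := fun m : ℕ =>
            wallisRatio (k - m) * wallisRatio (k + m + 1) / (2 * (m : ℝ) + 1) ^ 2)
            (fun m _ => ?_) (mem_range.mpr k.succ_pos)
          have := wallisRatio_pos (k - m); have := wallisRatio_pos (k + m + 1); positivity
  · have hsqrt : √3 ≤ 24 / 13 := by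
      rw [sqrt_le_left (by norm_num)]; norm_num
    have hconst : 8 * (19 / 12) ≤ 4 * (4 / √3 + 1) := by
      have : 13 / 6 ≤ 4 / √3 := by rw [le_div_iff₀ (by positivity)]; linarith
      linarith
    calc _ ≤ 8 * π ^ 2 * (1 / (2 * (k : ℝ) + 2) * (19 / 12)) := by
          gcongr; exact sum_wallisRatio_mul_div_two_mul_add_one_sq_le k
      _ = π ^ 2 * (8 * (19 / 12)) / (2 * k + 2) := by ring
      _ ≤ π ^ 2 * (4 * (4 / √3 + 1)) / (2 * k + 2) := by gcongr
      _ = _ := by ring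

theorem sigmaSq_bounds (n : ℕ) :
    (Even n →
      16 / 3 * Real.pi ^ 3 / ((n : ℝ) + 1) ≤ sigmaSq n ∧
        sigmaSq n ≤ (8 * Real.pi ^ 4 / 3 + 4 * Real.pi ^ 2) / ((n : ℝ) + 1)) ∧
    (Odd n →
      16 * Real.pi / ((n : ℝ) + 1) ≤ sigmaSq n ∧
        sigmaSq n ≤ 4 * Real.pi ^ 2 * (4 / Real.sqrt 3 + 1) / ((n : ℝ) + 1)) := by
  constructor
  · rintro ⟨k, rfl⟩
    rw [← two_mul]
    push_cast
    exact sigmaSq_two_mul_bounds k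
  · rintro ⟨k, rfl⟩
    push_cast
    rw [add_assoc, one_add_one_eq_two]
    exact sigmaSq_two_mul_add_one_bounds k
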